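/- Let α be a type with three pairwise distinct elements a, h, b : α, let m T : ℕ and n : Fin m → ℕ. Consider the language L₁ = (List.ofFn (fun i : Fin m => ({[a]} : Language α) ^ (n i) + 1)).prod * {[h]} * {[b]}. Then List.replicate T a ++ [h, b] ∈ L₁ if and only if there exists a Finset s of Fin m with ∑ i in s, n i = T. (This is the correctness of the reduction used in the paper's NP-hardness lemma for counter-ambiguity: the word a^T # b takes a path through the branch (a{n₁}+ε)⋯(a{n_m}+ε)#b exactly when T is a subset sum of {n₁,…,n_m}.) -/

import Mathlib

/-!
Each factor `{[a]} ^ nᵢ + 1` is the language of the words `aᵏ` with `k ∈ {nᵢ, 0}`. Since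
`k ↦ aᵏ` turns addition into concatenation, the product of the factors is the language of the
words `aᵏ` with `k` in the pointwise sum of these sets, i.e. with `k` a subset sum of the `nᵢ`.
Cancelling the trailing letters `h` and `b` reduces membership of `aᵀhb` to that of `aᵀ`.
-/

open scoped Pointwise

namespace Language

variable {α : Type*}

def unary (a : α) (S : Set ℕ) : Language α := (List.replicate · a) '' S

variable (a : α)

theorem replicate_mem_unary {S : Set ℕ} {k : ℕ} : List.replicate k a ∈ unary a S ↔ k ∈ S :=
  (List.replicate_left_injective a).mem_set_image

theorem unary_zero : unary a 0 = 1 :=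
  Set.image_singleton

theorem unary_add (S T : Set ℕ) : unary a (S + T) = unary a S * unary a T := by
  rw [unary, ← Set.image2_add, mul_def]
  exact Set.image_image2_distrib fun _ _ => List.replicate_add ..

theorem unary_union (S T : Set ℕ) : unary a (S ∪ T) = unary a S + unary a T :=
  Set.image_union ..

theorem unary_list_sum (l : List (Set ℕ)) : unary a l.sum = (l.map (unary a)).prod := by
  induction l with
  | nil => exact unary_zero a
  | cons S l ih => rw [List.sum_cons, List.map_cons, List.prod_cons, unary_add, ih]

theorem unary_singleton (k : ℕ) : unary a {k} = {[a]} ^ k := by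
  induction k with
  | zero => rw [Set.singleton_zero, unary_zero, pow_zero]
  | succ k ih =>
    rw [pow_succ, ← ih, ← Set.singleton_add_singleton, unary_add]
    exact congrArg _ Set.image_singleton

theorem singleton_pow_add_one (k : ℕ) : ({[a]} : Language α) ^ k + 1 = unary a {k, 0} := by
  rw [Set.insert_eq, unary_union, unary_singleton, Set.singleton_zero, unary_zero]

theorem prod_ofFn_singleton_pow_add_one {m : ℕ} (n : Fin m → ℕ) :
    (List.ofFn fun i => ({[a]} : Language α) ^ n i + 1).prod = unary a (∑ i, {n i, 0}) := by
  simp_rw [singleton_pow_add_one, ← List.sum_ofFn, unary_list_sum, List.map_ofFn]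
  rfl

theorem append_singleton_mem_mul_singleton {L : Language α} {x : List α} (c : α) :
    x ++ [c] ∈ L * {[c]} ↔ x ∈ L := by
  refine ⟨?_, fun hx => ⟨x, hx, [c], rfl, rfl⟩⟩
  rintro ⟨y, hy, _, rfl, hyx⟩
  rwa [List.append_cancel_right hyx] at hy

end Language

theorem Set.mem_fintype_sum_pair_zero {ι M : Type*} [Fintype ι] [AddCommMonoid M] (n : ι → M)
    (x : M) :
    x ∈ ∑ i, ({n i, 0} : Set M) ↔ ∃ s : Finset ι, ∑ i ∈ s, n i = x := by
  classical
  rw [Set.mem_fintype_sum]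
  constructor
  · rintro ⟨g, hg, rfl⟩
    refine ⟨Finset.univ.filter fun i => g i = n i, ?_⟩
    rw [Finset.sum_filter]
    refine Finset.sum_congr rfl fun i _ => ?_
    rcases hg i with h | h <;> split_ifs <;> simp_all
  · rintro ⟨s, rfl⟩
    refine ⟨fun i => if i ∈ s then n i else 0, fun i => ?_, by simp [Finset.sum_ite_mem]⟩
    by_cases hi : i ∈ s <;> simp [hi]

theorem stmt_1_general {α : Type*} (a h b : α)
    (m T : ℕ) (n : Fin m → ℕ) :
    List.replicate T a ++ [h, b] ∈
        (List.ofFn (fun i : Fin m => ({[a]} : Language α) ^ (n i) + 1)).prod *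
          {[h]} * {[b]} ↔
      ∃ s : Finset (Fin m), ∑ i ∈ s, n i = T := by
  rw [show List.replicate T a ++ [h, b] = List.replicate T a ++ [h] ++ [b] by simp,
    Language.append_singleton_mem_mul_singleton, Language.append_singleton_mem_mul_singleton,
    Language.prod_ofFn_singleton_pow_add_one, Language.replicate_mem_unary,
    Set.mem_fintype_sum_pair_zero]

theorem stmt_1 {α : Type*} (a h b : α) (hah : a ≠ h) (hab : a ≠ b) (hhb : h ≠ b)
    (m T : ℕ) (n : Fin m → ℕ) :
    List.replicate T a ++ [h, b] ∈
        (List.ofFn (fun i : Fin m => ({[a]} : Language α) ^ (n i) + 1)).prod *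
          {[h]} * {[b]} ↔
      ∃ s : Finset (Fin m), ∑ i ∈ s, n i = T :=
  stmt_1_general a h b m T n
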